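/- arXiv:2605.00386 — 5 statements merged into one kernel-verified Lean document; each statement's English description precedes it below -/
import Mathlib

section
/- Let F : ℝ^n × ℝ^m → ℝ^m be continuous, let g_i : ℝ^n × ℝ^m → ℝ (i = 1,…,ℓ) be continuous and, for each fixed x, differentiable in y with gradients ∇_y g_i jointly continuous in (x, y). Let K be the set of pairs (x, y) for which there exists λ ∈ ℝ^ℓ with F(x,y) + Σ_i λ_i ∇_y g_i(x,y) = 0, λ ≥ 0, g(x,y) ≤ 0, and λ_i g_i(x,y) = 0 for all i. Suppose the sequentially bounded constraint qualification holds: for every sequence (x^k, y^k) in K converging to some (x̄, ȳ), one can choose multipliers λ^k for (x^k, y^k) forming a bounded sequence. Then K is a closed subset of ℝ^n × ℝ^m. -/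
open scoped Topology

/-- `lam` is a KKT multiplier for the pair `p = (x, y)`. -/
def IsKKTMultiplier {n m ℓ : ℕ}
    (F : EuclideanSpace ℝ (Fin n) → EuclideanSpace ℝ (Fin m) → EuclideanSpace ℝ (Fin m))
    (g : Fin ℓ → EuclideanSpace ℝ (Fin n) → EuclideanSpace ℝ (Fin m) → ℝ)
    (p : EuclideanSpace ℝ (Fin n) × EuclideanSpace ℝ (Fin m))
    (lam : Fin ℓ → ℝ) : Prop :=
  F p.1 p.2 + ∑ i, lam i • gradient (g i p.1) p.2 = 0 ∧
    ∀ i, 0 ≤ lam i ∧ g i p.1 p.2 ≤ 0 ∧ lam i * g i p.1 p.2 = 0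

/-!
All data are continuous, so the pairs `(p, λ)` with `λ` a KKT multiplier for `p` form a closed
set, and `K` is its projection. Along a convergent sequence in `K`, SBCQ supplies bounded
multipliers; a convergent subsequence of them yields a multiplier at the limit point.
-/

open Filter Set

theorem isClosed_setOf_isKKTMultiplier {n m ℓ : ℕ}
    {F : EuclideanSpace ℝ (Fin n) → EuclideanSpace ℝ (Fin m) → EuclideanSpace ℝ (Fin m)}
    (hF : Continuous fun p : EuclideanSpace ℝ (Fin n) × EuclideanSpace ℝ (Fin m) => F p.1 p.2)
    {g : Fin ℓ → EuclideanSpace ℝ (Fin n) → EuclideanSpace ℝ (Fin m) → ℝ}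
    (hg : ∀ i, Continuous fun p : EuclideanSpace ℝ (Fin n) × EuclideanSpace ℝ (Fin m) =>
      g i p.1 p.2)
    (hggrad : ∀ i, Continuous fun p : EuclideanSpace ℝ (Fin n) × EuclideanSpace ℝ (Fin m) =>
      gradient (g i p.1) p.2) :
    IsClosed {q : (EuclideanSpace ℝ (Fin n) × EuclideanSpace ℝ (Fin m)) × (Fin ℓ → ℝ) |
      IsKKTMultiplier F g q.1 q.2} := by
  have hlam (i : Fin ℓ) : Continuous fun q :
      (EuclideanSpace ℝ (Fin n) × EuclideanSpace ℝ (Fin m)) × (Fin ℓ → ℝ) => q.2 i :=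
    (continuous_apply i).comp continuous_snd
  have hgi (i : Fin ℓ) : Continuous fun q :
      (EuclideanSpace ℝ (Fin n) × EuclideanSpace ℝ (Fin m)) × (Fin ℓ → ℝ) => g i q.1.1 q.1.2 :=
    (hg i).comp continuous_fst
  simp only [IsKKTMultiplier, ofPred_and, ofPred_forall]
  refine (isClosed_eq ?_ continuous_const).inter (isClosed_iInter fun i => ?_)
  · exact (hF.comp continuous_fst).add
      (continuous_finsetSum _ fun i _ => (hlam i).smul ((hggrad i).comp continuous_fst))
  · exact (isClosed_le continuous_const (hlam i)).inter
      ((isClosed_le (hgi i) continuous_const).inter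
        (isClosed_eq ((hlam i).mul (hgi i)) continuous_const))

theorem exists_mem_of_tendsto_of_isBounded {X Y : Type*} [TopologicalSpace X]
    [PseudoMetricSpace Y] [ProperSpace Y] {C : Set (X × Y)} (hC : IsClosed C)
    {x : ℕ → X} {y : ℕ → Y} {xbar : X} (hx : Tendsto x atTop (𝓝 xbar))
    (hy : Bornology.IsBounded (range y)) (hmem : ∀ k, (x k, y k) ∈ C) :
    ∃ ybar, (xbar, ybar) ∈ C := by
  obtain ⟨ybar, -, φ, hφ, hyφ⟩ :=
    tendsto_subseq_of_bounded hy (fun k => mem_range_self k)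
  exact ⟨ybar, hC.mem_of_tendsto ((hx.comp hφ.tendsto_atTop).prodMk_nhds hyφ)
    (Eventually.of_forall fun k => hmem (φ k))⟩

theorem kkt_set_closed_of_sbcq_general {n m ℓ : ℕ}
    (F : EuclideanSpace ℝ (Fin n) → EuclideanSpace ℝ (Fin m) → EuclideanSpace ℝ (Fin m))
    (hF : Continuous fun p : EuclideanSpace ℝ (Fin n) × EuclideanSpace ℝ (Fin m) => F p.1 p.2)
    (g : Fin ℓ → EuclideanSpace ℝ (Fin n) → EuclideanSpace ℝ (Fin m) → ℝ)
    (hg : ∀ i, Continuous fun p : EuclideanSpace ℝ (Fin n) × EuclideanSpace ℝ (Fin m) =>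
      g i p.1 p.2)
    (hggrad : ∀ i, Continuous fun p : EuclideanSpace ℝ (Fin n) × EuclideanSpace ℝ (Fin m) =>
      gradient (g i p.1) p.2)
    (K : Set (EuclideanSpace ℝ (Fin n) × EuclideanSpace ℝ (Fin m)))
    (hK : K = {p | ∃ lam : Fin ℓ → ℝ, IsKKTMultiplier F g p lam})
    (hSBCQ : ∀ (p : ℕ → EuclideanSpace ℝ (Fin n) × EuclideanSpace ℝ (Fin m))
      (pbar : EuclideanSpace ℝ (Fin n) × EuclideanSpace ℝ (Fin m)),
      (∀ k, p k ∈ K) → Filter.Tendsto p Filter.atTop (𝓝 pbar) →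
      ∃ lam : ℕ → Fin ℓ → ℝ, (∀ k, IsKKTMultiplier F g (p k) (lam k)) ∧
        ∃ B : ℝ, ∀ k, ‖lam k‖ ≤ B) :
    IsClosed K := by
  refine IsSeqClosed.isClosed fun p pbar hp hlim => ?_
  obtain ⟨lam, hlam, B, hB⟩ := hSBCQ p pbar hp hlim
  have hbdd : Bornology.IsBounded (range lam) :=
    isBounded_iff_forall_norm_le.2 ⟨B, forall_mem_range.2 hB⟩
  rw [hK]
  exact exists_mem_of_tendsto_of_isBounded (isClosed_setOf_isKKTMultiplier hF hg hggrad)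
    hlim hbdd hlam

/-- Under the sequentially bounded constraint qualification, the set of pairs
`(x, y)` admitting a KKT multiplier is closed. -/
theorem kkt_set_closed_of_sbcq {n m ℓ : ℕ}
    (F : EuclideanSpace ℝ (Fin n) → EuclideanSpace ℝ (Fin m) → EuclideanSpace ℝ (Fin m))
    (hF : Continuous fun p : EuclideanSpace ℝ (Fin n) × EuclideanSpace ℝ (Fin m) => F p.1 p.2)
    (g : Fin ℓ → EuclideanSpace ℝ (Fin n) → EuclideanSpace ℝ (Fin m) → ℝ)
    (hg : ∀ i, Continuous fun p : EuclideanSpace ℝ (Fin n) × EuclideanSpace ℝ (Fin m) =>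
      g i p.1 p.2)
    (hgdiff : ∀ i x, Differentiable ℝ (g i x))
    (hggrad : ∀ i, Continuous fun p : EuclideanSpace ℝ (Fin n) × EuclideanSpace ℝ (Fin m) =>
      gradient (g i p.1) p.2)
    (K : Set (EuclideanSpace ℝ (Fin n) × EuclideanSpace ℝ (Fin m)))
    (hK : K = {p | ∃ lam : Fin ℓ → ℝ, IsKKTMultiplier F g p lam})
    (hSBCQ : ∀ (p : ℕ → EuclideanSpace ℝ (Fin n) × EuclideanSpace ℝ (Fin m))
      (pbar : EuclideanSpace ℝ (Fin n) × EuclideanSpace ℝ (Fin m)),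
      (∀ k, p k ∈ K) → Filter.Tendsto p Filter.atTop (𝓝 pbar) →
      ∃ lam : ℕ → Fin ℓ → ℝ, (∀ k, IsKKTMultiplier F g (p k) (lam k)) ∧
        ∃ B : ℝ, ∀ k, ‖lam k‖ ≤ B) :
    IsClosed K :=
  kkt_set_closed_of_sbcq_general F hF g hg hggrad K hK hSBCQ
end

section
/- Let F : ℝ^n × ℝ^m → ℝ^m be continuous and let g_i : ℝ^n × ℝ^m → ℝ (i = 1,…,ℓ) be continuous with gradients ∇_y g_i in y jointly continuous in (x, y). Suppose the Mangasarian–Fromovitz constraint qualification holds at (x̄, ȳ) with g(x̄, ȳ) ≤ 0: there exists v ∈ ℝ^m with ⟨∇_y g_i(x̄, ȳ), v⟩ < 0 for every index i with g_i(x̄, ȳ) = 0. Then for every sequence (x^k, y^k) → (x̄, ȳ) and every choice of KKT multipliers λ^k ∈ ℝ^ℓ at (x^k, y^k) (i.e. F(x^k,y^k) + Σ_i λ^k_i ∇_y g_i(x^k,y^k) = 0, λ^k ≥ 0, g(x^k,y^k) ≤ 0, λ^k_i g_i(x^k,y^k) = 0), the sequence (λ^k) is bounded. -/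
/-!
Pair the stationarity equation `F + ∑ λᵢ ∇gᵢ = 0` with the MFCQ direction `v`. Near `(x̄, ȳ)`
the constraints inactive at `(x̄, ȳ)` stay strictly negative, so complementarity kills their
multipliers, while the active gradients still satisfy `⟪∇gᵢ, v⟫ ≤ -c` for a uniform `c > 0`.
Hence `c ∑ λᵢ ≤ ⟪F, v⟫ ≤ ‖F‖ ‖v‖`, and `F` is bounded along the convergent sequence.
-/

open scoped Topology

open scoped InnerProductSpace
open Filter

section

variable {E ι : Type*} [NormedAddCommGroup E] [InnerProductSpace ℝ E]

lemma pi_norm_le_sum_of_nonneg [Fintype ι] {lam : ι → ℝ} (hlam : ∀ i, 0 ≤ lam i) :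
    ‖lam‖ ≤ ∑ i, lam i :=
  (pi_norm_le_iff_of_nonneg (Finset.sum_nonneg fun i _ => hlam i)).2 fun i => by
    rw [Real.norm_of_nonneg (hlam i)]
    exact Finset.single_le_sum (fun j _ => hlam j) (Finset.mem_univ i)

lemma mul_sum_le_norm_mul_norm_of_add_sum_smul_eq_zero [Fintype ι] {f v : E} {a : ι → E}
    {lam : ι → ℝ} {c : ℝ} (hstat : f + ∑ i, lam i • a i = 0) (hlam : ∀ i, 0 ≤ lam i)
    (hdesc : ∀ i, lam i ≠ 0 → ⟪a i, v⟫_ℝ ≤ -c) :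
    c * ∑ i, lam i ≤ ‖f‖ * ‖v‖ := by
  have hpair : ⟪f, v⟫_ℝ + ∑ i, lam i * ⟪a i, v⟫_ℝ = 0 := by
    simpa only [inner_add_left, sum_inner, real_inner_smul_left, inner_zero_left]
      using congrArg (⟪·, v⟫_ℝ) hstat
  have hterm : ∀ i, lam i * ⟪a i, v⟫_ℝ ≤ -c * lam i := by
    intro i
    by_cases hi : lam i = 0
    · simp [hi]
    · nlinarith [hdesc i hi, hlam i]
  calc c * ∑ i, lam i = -∑ i, -c * lam i := by rw [Finset.mul_sum]; simp
    _ ≤ -∑ i, lam i * ⟪a i, v⟫_ℝ := neg_le_neg (Finset.sum_le_sum fun i _ => hterm i)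
    _ = ⟪f, v⟫_ℝ := by linarith
    _ ≤ ‖f‖ * ‖v‖ := real_inner_le_norm f v

lemma exists_pos_eventually_lt_zero_or_inner_le_neg [Finite ι] {X : Type*} [TopologicalSpace X]
    {g : ι → X → ℝ} {a : ι → X → E} {x₀ : X} {v : E} (hg : ∀ i, ContinuousAt (g i) x₀)
    (ha : ∀ i, ContinuousAt (a i) x₀) (hfeas : ∀ i, g i x₀ ≤ 0)
    (hv : ∀ i, g i x₀ = 0 → ⟪a i x₀, v⟫_ℝ < 0) :
    ∃ c > 0, ∀ᶠ x in 𝓝 x₀, ∀ i, g i x < 0 ∨ ⟪a i x, v⟫_ℝ ≤ -c := by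
  obtain ⟨c, hc, hcv⟩ : ∃ c > 0, ∀ i, g i x₀ = 0 → ⟪a i x₀, v⟫_ℝ < -c := by
    have hneg : Tendsto (fun c : ℝ => -c) (𝓝[>] 0) (𝓝 0) := by
      simpa using (continuous_neg.tendsto (0 : ℝ)).mono_left nhdsWithin_le_nhds
    refine ((eventually_mem_nhdsWithin : ∀ᶠ c in 𝓝[>] (0 : ℝ), c ∈ Set.Ioi 0).and
      (eventually_all.2 fun i => ?_)).exists
    by_cases hi : g i x₀ = 0
    · exact (hneg.eventually_const_lt (hv i hi)).mono fun _ h _ => h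
    · exact .of_forall fun _ h => (hi h).elim
  refine ⟨c, hc, eventually_all.2 fun i => ?_⟩
  by_cases hi : g i x₀ = 0
  · exact (((ha i).inner tendsto_const_nhds).eventually_lt_const (hcv i hi)).mono
      fun _ h => .inr h.le
  · exact ((hg i).eventually_lt_const ((hfeas i).lt_of_ne hi)).mono fun _ h => .inl h

end

lemma IsKKTMultiplier.norm_le {n m ℓ : ℕ}
    {F : EuclideanSpace ℝ (Fin n) → EuclideanSpace ℝ (Fin m) → EuclideanSpace ℝ (Fin m)}
    {g : Fin ℓ → EuclideanSpace ℝ (Fin n) → EuclideanSpace ℝ (Fin m) → ℝ}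
    {p : EuclideanSpace ℝ (Fin n) × EuclideanSpace ℝ (Fin m)} {lam : Fin ℓ → ℝ}
    {v : EuclideanSpace ℝ (Fin m)} {c : ℝ} (hkkt : IsKKTMultiplier F g p lam) (hc : 0 < c)
    (hdesc : ∀ i, g i p.1 p.2 < 0 ∨ ⟪gradient (g i p.1) p.2, v⟫_ℝ ≤ -c) :
    ‖lam‖ ≤ ‖F p.1 p.2‖ * ‖v‖ / c := by
  obtain ⟨hstat, hsign⟩ := hkkt
  have hdesc' : ∀ i, lam i ≠ 0 → ⟪gradient (g i p.1) p.2, v⟫_ℝ ≤ -c := fun i hi =>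
    (hdesc i).resolve_left fun hneg =>
      hi <| (mul_eq_zero.1 (hsign i).2.2).resolve_right hneg.ne
  rw [le_div_iff₀ hc]
  calc ‖lam‖ * c ≤ c * ∑ i, lam i := by
        rw [mul_comm]
        exact mul_le_mul_of_nonneg_left (pi_norm_le_sum_of_nonneg fun i => (hsign i).1) hc.le
    _ ≤ ‖F p.1 p.2‖ * ‖v‖ :=
        mul_sum_le_norm_mul_norm_of_add_sum_smul_eq_zero hstat (fun i => (hsign i).1) hdesc'

theorem mfcq_implies_bounded_multipliers_general {n m ℓ : ℕ}
    (F : EuclideanSpace ℝ (Fin n) → EuclideanSpace ℝ (Fin m) → EuclideanSpace ℝ (Fin m))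
    (hF : Continuous fun p : EuclideanSpace ℝ (Fin n) × EuclideanSpace ℝ (Fin m) => F p.1 p.2)
    (g : Fin ℓ → EuclideanSpace ℝ (Fin n) → EuclideanSpace ℝ (Fin m) → ℝ)
    (hg : ∀ i, Continuous fun p : EuclideanSpace ℝ (Fin n) × EuclideanSpace ℝ (Fin m) =>
      g i p.1 p.2)
    (hggrad : ∀ i, Continuous fun p : EuclideanSpace ℝ (Fin n) × EuclideanSpace ℝ (Fin m) =>
      gradient (g i p.1) p.2)
    (xbar : EuclideanSpace ℝ (Fin n)) (ybar : EuclideanSpace ℝ (Fin m))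
    (hfeas : ∀ i, g i xbar ybar ≤ 0)
    (hMFCQ : ∃ v : EuclideanSpace ℝ (Fin m), ∀ i, g i xbar ybar = 0 →
      inner ℝ (gradient (g i xbar) ybar) v < (0 : ℝ)) :
    ∀ (p : ℕ → EuclideanSpace ℝ (Fin n) × EuclideanSpace ℝ (Fin m)),
      Filter.Tendsto p Filter.atTop (𝓝 (xbar, ybar)) →
      ∀ lam : ℕ → Fin ℓ → ℝ, (∀ k, IsKKTMultiplier F g (p k) (lam k)) →
      ∃ B : ℝ, ∀ k, ‖lam k‖ ≤ B := by
  intro p hp lam hlam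
  obtain ⟨v, hv⟩ := hMFCQ
  obtain ⟨c, hc, hdesc⟩ := exists_pos_eventually_lt_zero_or_inner_le_neg
    (x₀ := (xbar, ybar)) (fun i => (hg i).continuousAt) (fun i => (hggrad i).continuousAt)
    hfeas hv
  have hFbdd : IsBoundedUnder (· ≤ ·) atTop fun k => ‖F (p k).1 (p k).2‖ * ‖v‖ / c :=
    ((((hF.tendsto _).comp hp).norm.mul_const ‖v‖).div_const c).isBoundedUnder_le
  have hlam_bdd : IsBoundedUnder (· ≤ ·) atTop fun k => ‖lam k‖ :=
    hFbdd.mono_le ((hp.eventually hdesc).mono fun k hk => (hlam k).norm_le hc hk)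
  obtain ⟨B, hB⟩ := hlam_bdd.bddAbove_range
  exact ⟨B, fun k => hB ⟨k, rfl⟩⟩

/-- Under MFCQ at a feasible point `(x̄, ȳ)`, every sequence of KKT multipliers
along points converging to `(x̄, ȳ)` is bounded. -/
theorem mfcq_implies_bounded_multipliers {n m ℓ : ℕ}
    (F : EuclideanSpace ℝ (Fin n) → EuclideanSpace ℝ (Fin m) → EuclideanSpace ℝ (Fin m))
    (hF : Continuous fun p : EuclideanSpace ℝ (Fin n) × EuclideanSpace ℝ (Fin m) => F p.1 p.2)
    (g : Fin ℓ → EuclideanSpace ℝ (Fin n) → EuclideanSpace ℝ (Fin m) → ℝ)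
    (hg : ∀ i, Continuous fun p : EuclideanSpace ℝ (Fin n) × EuclideanSpace ℝ (Fin m) =>
      g i p.1 p.2)
    (hgdiff : ∀ i x, Differentiable ℝ (g i x))
    (hggrad : ∀ i, Continuous fun p : EuclideanSpace ℝ (Fin n) × EuclideanSpace ℝ (Fin m) =>
      gradient (g i p.1) p.2)
    (xbar : EuclideanSpace ℝ (Fin n)) (ybar : EuclideanSpace ℝ (Fin m))
    (hfeas : ∀ i, g i xbar ybar ≤ 0)
    (hMFCQ : ∃ v : EuclideanSpace ℝ (Fin m), ∀ i, g i xbar ybar = 0 →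
      inner ℝ (gradient (g i xbar) ybar) v < (0 : ℝ)) :
    ∀ (p : ℕ → EuclideanSpace ℝ (Fin n) × EuclideanSpace ℝ (Fin m)),
      Filter.Tendsto p Filter.atTop (𝓝 (xbar, ybar)) →
      ∀ lam : ℕ → Fin ℓ → ℝ, (∀ k, IsKKTMultiplier F g (p k) (lam k)) →
      ∃ B : ℝ, ∀ k, ‖lam k‖ ≤ B :=
  mfcq_implies_bounded_multipliers_general F hF g hg hggrad xbar ybar hfeas hMFCQ
end

section
/- Frank–Wolfe theorem: Let Q : ℝ^d → ℝ^d be a symmetric linear map, c ∈ ℝ^d, and define the quadratic function f(x) = ½⟨x, Q x⟩ + ⟨c, x⟩. Let P = {x ∈ ℝ^d : ⟨a_i, x⟩ ≤ b_i for i = 1,…,k} be a nonempty polyhedron. If f is bounded below on P, then f attains its minimum over P. -/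
/-!
Induction on the dimension, carrying along a minimizing sequence `x k` in the polyhedron `P`.
If the sequence has a bounded subsequence, one of its limit points is a minimizer. Otherwise
`x k / ‖x k‖` accumulates at a unit vector `v`; then `v` is a recession direction of `P`, and
`⟪v, Q v⟫ = 0` because `f (x k)` stays bounded while `‖x k‖ → ∞`. Hence `f` is affine along `v`,
with a slope that is nonnegative on `P` since `f` is bounded below there.
If every constraint is constant along `v`, removing the `v`-component of `x k` keeps it in `P`
without changing `f`, and lands in `v^⊥`. Otherwise, pushing each `x k` back along `v` until some
constraint becomes tight does not increase `f`, and infinitely many of the new points lie on the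
same hyperplane `⟪a i, x⟫ = b i`. Either way we obtain a minimizing sequence in an affine subspace
of smaller dimension, on which `f` and `P` restrict to a problem of the same kind.
-/

open Filter Topology Module Metric
open scoped RealInnerProductSpace

namespace FrankWolfe

theorem nonneg_of_forall_le_mul_add {L β γ : ℝ} (h : ∀ t : ℝ, 0 ≤ t → L ≤ β * t + γ) :
    0 ≤ β := by
  by_contra! hβ
  have h₀ := h 0 le_rfl
  have h₁ := h ((γ - L + 1) / -β) (div_nonneg (by linarith) (by linarith))
  have hβt : β * ((γ - L + 1) / -β) = -(γ - L + 1) := by field_simp [hβ.ne]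
  linarith

theorem finrank_orthogonal_span_singleton_lt {𝕜 F : Type*} [RCLike 𝕜] [NormedAddCommGroup F]
    [InnerProductSpace 𝕜 F] [FiniteDimensional 𝕜 F] {u : F} (hu : u ≠ 0) :
    finrank 𝕜 (𝕜 ∙ u)ᗮ < finrank 𝕜 F := by
  have := Submodule.finrank_add_finrank_orthogonal (𝕜 ∙ u)
  rw [finrank_span_singleton hu] at this
  omega

theorem exists_eq_of_frequently_mem_compact {X : Type*} [TopologicalSpace X]
    [FirstCountableTopology X] {f : X → ℝ} (hf : Continuous f) {S K : Set X} (hS : IsClosed S)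
    (hK : IsCompact K) {x : ℕ → X} (hxS : ∀ k, x k ∈ S) (hxK : ∃ᶠ k in atTop, x k ∈ K) {m : ℝ}
    (hx : Tendsto (fun k => f (x k)) atTop (𝓝 m)) : ∃ y ∈ S, f y = m := by
  obtain ⟨y, -, φ, hφ, hlim⟩ := hK.tendsto_subseq' hxK
  exact ⟨y, hS.mem_of_tendsto hlim (Eventually.of_forall fun k => hxS _),
    tendsto_nhds_unique ((hf.tendsto y).comp hlim) (hx.comp hφ.tendsto_atTop)⟩

theorem exists_minimizing_seq {X : Type*} {f : X → ℝ} {S : Set X} (hS : S.Nonempty)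
    (hf : BddBelow (f '' S)) : ∃ m : ℝ, (∀ x ∈ S, m ≤ f x) ∧
      ∃ x : ℕ → X, (∀ k, x k ∈ S) ∧ Tendsto (fun k => f (x k)) atTop (𝓝 m) := by
  obtain ⟨u, -, hu, huS⟩ := exists_seq_tendsto_sInf (hS.image f) hf
  choose x hxS hxu using huS
  exact ⟨sInf (f '' S), fun y hy => csInf_le hf (Set.mem_image_of_mem f hy), x, hxS,
    by simpa only [hxu] using hu⟩

section Basic

variable {E : Type*} [NormedAddCommGroup E] [InnerProductSpace ℝ E]

noncomputable def quadraticFun (Q : E →ₗ[ℝ] E) (c x : E) : ℝ := (1 / 2) * ⟪x, Q x⟫ + ⟪c, x⟫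

def polyhedron {ι : Type*} (a : ι → E) (b : ι → ℝ) : Set E := {x | ∀ i, ⟪a i, x⟫ ≤ b i}

variable {Q : E →ₗ[ℝ] E} {c : E} {ι : Type*} {a : ι → E} {b : ι → ℝ}

theorem quadraticFun_add_smul (hQ : Q.IsSymmetric) (x v : E) (t : ℝ) :
    quadraticFun Q c (x + t • v) =
      quadraticFun Q c x + t * ⟪Q x + c, v⟫ + t ^ 2 * ((1 / 2) * ⟪v, Q v⟫) := by
  have h₁ : ⟪v, Q x⟫ = ⟪Q x, v⟫ := real_inner_comm _ _
  have h₂ : ⟪x, Q v⟫ = ⟪Q x, v⟫ := (hQ x v).symm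
  simp only [quadraticFun, map_add, map_smul, inner_add_left, inner_add_right,
    real_inner_smul_left, real_inner_smul_right, h₁, h₂]
  ring

theorem quadraticFun_add_smul_of_inner_map_self_eq_zero (hQ : Q.IsSymmetric) {v : E}
    (hv : ⟪v, Q v⟫ = 0) (x : E) (t : ℝ) :
    quadraticFun Q c (x + t • v) = quadraticFun Q c x + t * ⟪Q x + c, v⟫ := by
  rw [quadraticFun_add_smul hQ, hv]
  ring

theorem continuous_quadraticFun [FiniteDimensional ℝ E] (Q : E →ₗ[ℝ] E) (c : E) :
    Continuous (quadraticFun Q c) :=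
  (continuous_const.mul (continuous_id.inner Q.continuous_of_finiteDimensional)).add
    (continuous_const.inner continuous_id)

theorem isClosed_polyhedron (a : ι → E) (b : ι → ℝ) : IsClosed (polyhedron a b) := by
  simp only [polyhedron, Set.ofPred_forall]
  exact isClosed_iInter fun i => isClosed_le (continuous_const.inner continuous_id) continuous_const

theorem add_smul_mem_polyhedron {x v : E} (hx : x ∈ polyhedron a b) (hv : ∀ i, ⟪a i, v⟫ ≤ 0)
    {t : ℝ} (ht : 0 ≤ t) : x + t • v ∈ polyhedron a b := fun i => by
  rw [inner_add_right, real_inner_smul_right]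
  nlinarith [hx i, hv i]

theorem add_smul_mem_polyhedron_of_inner_eq_zero {x v : E} (hx : x ∈ polyhedron a b)
    (hv : ∀ i, ⟪a i, v⟫ = 0) (t : ℝ) : x + t • v ∈ polyhedron a b := fun i => by
  rw [inner_add_right, real_inner_smul_right, hv i, mul_zero, add_zero]
  exact hx i

theorem exists_add_smul_mem_polyhedron_inner_eq [Finite ι] {x u : E} (hx : x ∈ polyhedron a b)
    (hu : ∃ i, 0 < ⟪a i, u⟫) :
    ∃ t : ℝ, 0 ≤ t ∧ ∃ i, 0 < ⟪a i, u⟫ ∧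
      x + t • u ∈ polyhedron a b ∧ ⟪a i, x + t • u⟫ = b i := by
  set g : ι → ℝ := fun i => (b i - ⟪a i, x⟫) / ⟪a i, u⟫
  obtain ⟨i, hi : 0 < ⟪a i, u⟫, hmin⟩ :=
    Set.exists_min_image {i | 0 < ⟪a i, u⟫} g (Set.toFinite _) hu
  have hg : 0 ≤ g i := div_nonneg (sub_nonneg.2 (hx i)) hi.le
  refine ⟨g i, hg, i, hi, fun j => ?_, ?_⟩
  · rw [inner_add_right, real_inner_smul_right]
    rcases lt_or_ge 0 ⟪a j, u⟫ with hj | hj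
    · have := hmin j hj
      rw [le_div_iff₀ hj] at this
      linarith
    · nlinarith [hx j, hg]
  · rw [inner_add_right, real_inner_smul_right, div_mul_cancel₀ _ hi.ne']
    ring

end Basic

section Asymptotic

variable {E : Type*} [NormedAddCommGroup E] [InnerProductSpace ℝ E] {z : ℕ → E} {v : E}

theorem exists_subseq_tendsto_normalize [FiniteDimensional ℝ E]
    (hz : Tendsto (fun k => ‖z k‖) atTop atTop) :
    ∃ v : E, ‖v‖ = 1 ∧ ∃ φ : ℕ → ℕ, StrictMono φ ∧
      Tendsto (fun k => ‖z (φ k)‖⁻¹ • z (φ k)) atTop (𝓝 v) := by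
  have hsphere : ∃ᶠ k in atTop, ‖z k‖⁻¹ • z k ∈ sphere (0 : E) 1 := by
    refine ((hz.eventually_gt_atTop 0).mono fun k hk => ?_).frequently
    rw [mem_sphere_zero_iff_norm, norm_smul, norm_inv, norm_norm, inv_mul_cancel₀ hk.ne']
  obtain ⟨v, hv, φ, hφ, hlim⟩ := (isCompact_sphere (0 : E) 1).tendsto_subseq' hsphere
  exact ⟨v, mem_sphere_zero_iff_norm.1 hv, φ, hφ, hlim⟩

variable (hz : Tendsto (fun k => ‖z k‖) atTop atTop)
  (hzv : Tendsto (fun k => ‖z k‖⁻¹ • z k) atTop (𝓝 v))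
include hz hzv

theorem inner_nonpos_of_tendsto_normalize {a : E} {b : ℝ} (hab : ∀ k, ⟪a, z k⟫ ≤ b) :
    ⟪a, v⟫ ≤ 0 := by
  have hlim : Tendsto (fun k => ‖z k‖⁻¹ * b) atTop (𝓝 0) := by
    simpa using (tendsto_inv_atTop_zero.comp hz).mul_const b
  refine le_of_tendsto_of_tendsto (tendsto_const_nhds.inner hzv) hlim ?_
  filter_upwards [hz.eventually_gt_atTop 0] with k hk
  rw [real_inner_smul_right]
  exact mul_le_mul_of_nonneg_left (hab k) (inv_nonneg.2 hk.le)

theorem inner_map_self_eq_zero_of_tendsto_normalize [FiniteDimensional ℝ E] {Q : E →ₗ[ℝ] E}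
    {c : E} {m : ℝ} (hQz : Tendsto (fun k => quadraticFun Q c (z k)) atTop (𝓝 m)) :
    ⟪v, Q v⟫ = 0 := by
  set r : ℕ → ℝ := fun k => ‖z k‖⁻¹
  have hr : Tendsto r atTop (𝓝 0) := tendsto_inv_atTop_zero.comp hz
  have hscale : ∀ᶠ k in atTop, r k ^ 2 * quadraticFun Q c (z k) =
      (1 / 2) * ⟪r k • z k, Q (r k • z k)⟫ + r k * ⟪c, r k • z k⟫ := by
    filter_upwards [hz.eventually_gt_atTop 0] with k hk
    simp only [r, quadraticFun, map_smul, real_inner_smul_left, real_inner_smul_right]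
    field_simp
  have hlhs : Tendsto (fun k => r k ^ 2 * quadraticFun Q c (z k)) atTop (𝓝 0) := by
    simpa using (hr.pow 2).mul hQz
  have hrhs : Tendsto (fun k => (1 / 2) * ⟪r k • z k, Q (r k • z k)⟫ + r k * ⟪c, r k • z k⟫)
      atTop (𝓝 ((1 / 2) * ⟪v, Q v⟫ + 0 * ⟪c, v⟫)) :=
    ((hzv.inner ((Q.continuous_of_finiteDimensional.tendsto v).comp hzv)).const_mul _).add
      (hr.mul (tendsto_const_nhds.inner hzv))
  have := tendsto_nhds_unique (hlhs.congr' hscale) hrhs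
  linarith

end Asymptotic

section Slope

variable {E : Type*} [NormedAddCommGroup E] [InnerProductSpace ℝ E] {Q : E →ₗ[ℝ] E} {c v : E}

theorem inner_map_add_nonneg_of_bddBelow (hQ : Q.IsSymmetric) (hv : ⟪v, Q v⟫ = 0) {S : Set E}
    {L : ℝ} (hL : ∀ x ∈ S, L ≤ quadraticFun Q c x) (hS : ∀ x ∈ S, ∀ t : ℝ, 0 ≤ t → x + t • v ∈ S)
    {x : E} (hx : x ∈ S) : 0 ≤ ⟪Q x + c, v⟫ :=
  nonneg_of_forall_le_mul_add (L := L) (γ := quadraticFun Q c x) fun t ht => by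
    have := hL _ (hS x hx t ht)
    rw [quadraticFun_add_smul_of_inner_map_self_eq_zero hQ hv] at this
    linarith

end Slope

section Compression

variable {E : Type*} [NormedAddCommGroup E] [InnerProductSpace ℝ E]
  (W : Submodule ℝ E) [W.HasOrthogonalProjection]

noncomputable def compression (Q : E →ₗ[ℝ] E) : W →ₗ[ℝ] W :=
  W.orthogonalProjectionOnto.toLinearMap ∘ₗ Q ∘ₗ W.subtype

variable {W} {Q : E →ₗ[ℝ] E}

theorem compression_apply (w : W) : compression W Q w = W.orthogonalProjectionOnto (Q w) := rfl

theorem isSymmetric_compression (hQ : Q.IsSymmetric) : (compression W Q).IsSymmetric := by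
  intro w₁ w₂
  rw [compression_apply, compression_apply,
    Submodule.inner_orthogonalProjectionOnto_eq_of_mem_right,
    Submodule.inner_orthogonalProjectionOnto_eq_of_mem_left]
  exact hQ _ _

theorem quadraticFun_compression (hQ : Q.IsSymmetric) (c p : E) (w : W) :
    quadraticFun (compression W Q) (W.orthogonalProjectionOnto (Q p + c)) w =
      quadraticFun Q c (p + w) - quadraticFun Q c p := by
  have := quadraticFun_add_smul (c := c) hQ p w 1
  rw [one_smul] at this
  rw [this, quadraticFun, compression_apply,
    Submodule.inner_orthogonalProjectionOnto_eq_of_mem_left,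
    Submodule.inner_orthogonalProjectionOnto_eq_of_mem_right]
  ring

theorem mem_polyhedron_compression_iff {ι : Type*} (a : ι → E) (b : ι → ℝ) (p : E) (w : W) :
    w ∈ polyhedron (fun i => W.orthogonalProjectionOnto (a i)) (fun i => b i - ⟪a i, p⟫) ↔
      p + w ∈ polyhedron a b := by
  simp only [polyhedron, Set.mem_ofPred_eq,
    Submodule.inner_orthogonalProjectionOnto_eq_of_mem_right, inner_add_right, le_sub_iff_add_le']

end Compression

section Induction

variable (ι : Type*)

-- Carrying a minimizing sequence through the induction lets a recession step hand a minimizing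
-- sequence on a lower-dimensional affine subspace to the induction hypothesis.
def AttainsQuadraticInf (E : Type*) [NormedAddCommGroup E] [InnerProductSpace ℝ E] : Prop :=
  ∀ Q : E →ₗ[ℝ] E, Q.IsSymmetric → ∀ (c : E) (a : ι → E) (b : ι → ℝ) (m : ℝ) (x : ℕ → E),
    (∀ k, x k ∈ polyhedron a b) → (∀ y ∈ polyhedron a b, m ≤ quadraticFun Q c y) →
    Tendsto (fun k => quadraticFun Q c (x k)) atTop (𝓝 m) →
    ∃ y ∈ polyhedron a b, quadraticFun Q c y = m

variable {ι} {E : Type*} [NormedAddCommGroup E] [InnerProductSpace ℝ E]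
  {Q : E →ₗ[ℝ] E} {c : E} {a : ι → E} {b : ι → ℝ} {m : ℝ}

theorem AttainsQuadraticInf.exists_of_sub_mem {W : Submodule ℝ E} [W.HasOrthogonalProjection]
    (hW : AttainsQuadraticInf ι W) (hQ : Q.IsSymmetric) {p : E} {y : ℕ → E}
    (hyW : ∀ k, y k - p ∈ W) (hyP : ∀ k, y k ∈ polyhedron a b)
    (hm : ∀ x ∈ polyhedron a b, m ≤ quadraticFun Q c x)
    (hy : Tendsto (fun k => quadraticFun Q c (y k)) atTop (𝓝 m)) :
    ∃ x ∈ polyhedron a b, quadraticFun Q c x = m := by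
  have hpy : ∀ k, p + ((⟨y k - p, hyW k⟩ : W) : E) = y k := fun k => add_sub_cancel p (y k)
  obtain ⟨w, hwP, hw⟩ := hW (compression W Q) (isSymmetric_compression hQ)
    (W.orthogonalProjectionOnto (Q p + c)) (fun i => W.orthogonalProjectionOnto (a i))
    (fun i => b i - ⟪a i, p⟫) (m - quadraticFun Q c p) (fun k => ⟨y k - p, hyW k⟩)
    (fun k => (mem_polyhedron_compression_iff a b p _).2 (by rw [hpy]; exact hyP k))
    (fun w hw => by
      rw [quadraticFun_compression hQ]
      linarith [hm _ ((mem_polyhedron_compression_iff a b p w).1 hw)])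
    (by simpa only [quadraticFun_compression hQ, hpy] using hy.sub_const (quadraticFun Q c p))
  refine ⟨p + w, (mem_polyhedron_compression_iff a b p w).1 hwP, ?_⟩
  rw [quadraticFun_compression hQ] at hw
  linarith

theorem AttainsQuadraticInf.exists_of_inner_eq_zero {v : E}
    (hW : AttainsQuadraticInf ι (ℝ ∙ v)ᗮ) (hQ : Q.IsSymmetric) (hv : ‖v‖ = 1)
    (hav : ∀ i, ⟪a i, v⟫ = 0) (hQv : ⟪v, Q v⟫ = 0) {z : ℕ → E}
    (hzP : ∀ k, z k ∈ polyhedron a b) (hm : ∀ x ∈ polyhedron a b, m ≤ quadraticFun Q c x)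
    (hz : Tendsto (fun k => quadraticFun Q c (z k)) atTop (𝓝 m)) :
    ∃ x ∈ polyhedron a b, quadraticFun Q c x = m := by
  -- along the lineality direction `±v` the function is affine and bounded below, hence constant
  have hslope : ∀ x ∈ polyhedron a b, ⟪Q x + c, v⟫ = 0 := fun x hx => by
    have hpos := inner_map_add_nonneg_of_bddBelow hQ hQv hm
      (fun x hx t _ => add_smul_mem_polyhedron_of_inner_eq_zero hx hav t) hx
    have hneg := inner_map_add_nonneg_of_bddBelow (v := -v) hQ
      (by rw [map_neg, inner_neg_neg, hQv]) hm
      (fun x hx t _ => add_smul_mem_polyhedron_of_inner_eq_zero hx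
        (fun i => by rw [inner_neg_right, hav i, neg_zero]) t) hx
    rw [inner_neg_right] at hneg
    linarith
  set y : ℕ → E := fun k => z k + (-⟪v, z k⟫) • v
  have hyP : ∀ k, y k ∈ polyhedron a b := fun k =>
    add_smul_mem_polyhedron_of_inner_eq_zero (hzP k) hav _
  have hy : ∀ k, quadraticFun Q c (y k) = quadraticFun Q c (z k) := fun k => by
    rw [quadraticFun_add_smul_of_inner_map_self_eq_zero hQ hQv, hslope _ (hzP k), mul_zero,
      add_zero]
  refine hW.exists_of_sub_mem hQ (p := 0) (fun k => ?_) hyP hm (by simpa only [hy] using hz)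
  rw [sub_zero, Submodule.mem_orthogonal_singleton_iff_inner_right, inner_add_right,
    real_inner_smul_right, real_inner_self_eq_norm_sq, hv]
  ring

theorem exists_subseq_sub_smul_mem_polyhedron_inner_eq [Finite ι] {z : ℕ → E} {v : E}
    (hzP : ∀ k, z k ∈ polyhedron a b) (hav : ∃ i, ⟪a i, v⟫ < 0) :
    ∃ i, ⟪a i, v⟫ < 0 ∧ ∃ φ : ℕ → ℕ, StrictMono φ ∧ ∃ t : ℕ → ℝ, ∀ k, 0 ≤ t k ∧
      z (φ k) - t k • v ∈ polyhedron a b ∧ ⟪a i, z (φ k) - t k • v⟫ = b i := by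
  have hu : ∃ i, 0 < ⟪a i, -v⟫ := by simpa only [inner_neg_right, neg_pos] using hav
  choose t ht i hi hmem htight using fun k => exists_add_smul_mem_polyhedron_inner_eq (hzP k) hu
  obtain ⟨i₀, hi₀⟩ := Finite.exists_infinite_fiber i
  obtain ⟨φ, hφ, hφi⟩ : ∃ φ : ℕ → ℕ, StrictMono φ ∧ ∀ k, i (φ k) = i₀ :=
    extraction_of_frequently_atTop
      (Nat.frequently_atTop_iff_infinite.2 (Set.infinite_coe_iff.1 hi₀))
  simp only [smul_neg, ← sub_eq_add_neg] at hmem htight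
  refine ⟨i₀, ?_, φ, hφ, fun k => t (φ k), fun k => ⟨ht _, hmem _, ?_⟩⟩
  · simpa only [inner_neg_right, neg_pos, hφi 0] using hi (φ 0)
  · simpa only [hφi k] using htight (φ k)

variable [FiniteDimensional ℝ E]

theorem exists_of_inner_neg [Finite ι]
    (ih : ∀ W : Submodule ℝ E, finrank ℝ W < finrank ℝ E → AttainsQuadraticInf ι W)
    (hQ : Q.IsSymmetric) {v : E} (hav : ∀ i, ⟪a i, v⟫ ≤ 0) (hav_neg : ∃ i, ⟪a i, v⟫ < 0)
    (hQv : ⟪v, Q v⟫ = 0) {z : ℕ → E} (hzP : ∀ k, z k ∈ polyhedron a b)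
    (hm : ∀ x ∈ polyhedron a b, m ≤ quadraticFun Q c x)
    (hz : Tendsto (fun k => quadraticFun Q c (z k)) atTop (𝓝 m)) :
    ∃ x ∈ polyhedron a b, quadraticFun Q c x = m := by
  obtain ⟨i, hi, φ, hφ, t, ht⟩ := exists_subseq_sub_smul_mem_polyhedron_inner_eq hzP hav_neg
  choose ht₀ hyP hyi using ht
  have hslope : ∀ x ∈ polyhedron a b, 0 ≤ ⟪Q x + c, v⟫ := fun x hx =>
    inner_map_add_nonneg_of_bddBelow hQ hQv hm
      (fun x hx t ht => add_smul_mem_polyhedron hx hav ht) hx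
  have hyz : ∀ k, quadraticFun Q c (z (φ k) - t k • v) ≤ quadraticFun Q c (z (φ k)) := fun k => by
    rw [sub_eq_add_neg, ← neg_smul, quadraticFun_add_smul_of_inner_map_self_eq_zero hQ hQv]
    nlinarith [ht₀ k, hslope _ (hzP (φ k))]
  have hai : a i ≠ 0 := by
    rintro h
    simp [h] at hi
  refine (ih _ (finrank_orthogonal_span_singleton_lt hai)).exists_of_sub_mem hQ
    (p := z (φ 0) - t 0 • v) (fun k => ?_) hyP hm ?_
  · rw [Submodule.mem_orthogonal_singleton_iff_inner_right, inner_sub_right, hyi, hyi, sub_self]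
  · exact tendsto_of_tendsto_of_tendsto_of_le_of_le tendsto_const_nhds
      (hz.comp hφ.tendsto_atTop) (fun k => hm _ (hyP k)) hyz

theorem exists_of_tendsto_norm_atTop [Finite ι]
    (ih : ∀ W : Submodule ℝ E, finrank ℝ W < finrank ℝ E → AttainsQuadraticInf ι W)
    (hQ : Q.IsSymmetric) {x : ℕ → E} (hxP : ∀ k, x k ∈ polyhedron a b)
    (hm : ∀ y ∈ polyhedron a b, m ≤ quadraticFun Q c y)
    (hx : Tendsto (fun k => quadraticFun Q c (x k)) atTop (𝓝 m))
    (hxn : Tendsto (fun k => ‖x k‖) atTop atTop) :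
    ∃ y ∈ polyhedron a b, quadraticFun Q c y = m := by
  obtain ⟨v, hv, φ, hφ, hxv⟩ := exists_subseq_tendsto_normalize hxn
  have hzn := hxn.comp hφ.tendsto_atTop
  have hz := hx.comp hφ.tendsto_atTop
  have hav : ∀ i, ⟪a i, v⟫ ≤ 0 := fun i =>
    inner_nonpos_of_tendsto_normalize hzn hxv fun k => hxP (φ k) i
  have hQv : ⟪v, Q v⟫ = 0 := inner_map_self_eq_zero_of_tendsto_normalize hzn hxv hz
  by_cases hline : ∀ i, ⟪a i, v⟫ = 0
  · have hv₀ : v ≠ 0 := ne_zero_of_norm_ne_zero (hv ▸ one_ne_zero)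
    exact (ih _ (finrank_orthogonal_span_singleton_lt hv₀)).exists_of_inner_eq_zero hQ hv hline
      hQv (fun k => hxP (φ k)) hm hz
  · obtain ⟨i, hi⟩ := not_forall.1 hline
    exact exists_of_inner_neg ih hQ hav ⟨i, (hav i).lt_of_ne hi⟩ hQv (fun k => hxP (φ k)) hm hz

end Induction

theorem attainsQuadraticInf (ι : Type*) [Finite ι] (E : Type*) [NormedAddCommGroup E]
    [InnerProductSpace ℝ E] [FiniteDimensional ℝ E] : AttainsQuadraticInf ι E := by
  induction hn : finrank ℝ E using Nat.strong_induction_on generalizing E with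
  | _ n ih =>
    intro Q hQ c a b m x hxP hm hx
    by_cases hxn : Tendsto (fun k => ‖x k‖) atTop atTop
    · exact exists_of_tendsto_norm_atTop (fun W hW => ih _ (hn ▸ hW) W rfl) hQ hxP hm hx hxn
    · obtain ⟨R, hR⟩ : ∃ R, ∃ᶠ k in atTop, ‖x k‖ < R := by
        simpa only [Filter.tendsto_atTop, not_forall, not_eventually, not_le] using hxn
      exact exists_eq_of_frequently_mem_compact (continuous_quadraticFun Q c)
        (isClosed_polyhedron a b) (isCompact_closedBall 0 R) hxP
        (hR.mono fun k hk => mem_closedBall_zero_iff.2 hk.le) hx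

end FrankWolfe

/-- Frank–Wolfe theorem: a quadratic function bounded below on a nonempty
polyhedron attains its minimum there. -/
theorem frank_wolfe {d k : ℕ}
    (Q : EuclideanSpace ℝ (Fin d) →ₗ[ℝ] EuclideanSpace ℝ (Fin d))
    (hQ : ∀ x y : EuclideanSpace ℝ (Fin d), (inner ℝ (Q x) y : ℝ) = inner ℝ x (Q y))
    (c : EuclideanSpace ℝ (Fin d))
    (f : EuclideanSpace ℝ (Fin d) → ℝ)
    (hfdef : ∀ x, f x = (1 / 2) * inner ℝ x (Q x) + (inner ℝ c x : ℝ))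
    (a : Fin k → EuclideanSpace ℝ (Fin d)) (b : Fin k → ℝ)
    (P : Set (EuclideanSpace ℝ (Fin d)))
    (hPdef : P = {x | ∀ i, (inner ℝ (a i) x : ℝ) ≤ b i})
    (hPne : P.Nonempty)
    (hbdd : ∃ L : ℝ, ∀ x ∈ P, L ≤ f x) :
    ∃ x ∈ P, ∀ y ∈ P, f x ≤ f y := by
  obtain rfl : f = FrankWolfe.quadraticFun Q c := funext hfdef
  obtain ⟨L, hL⟩ := hbdd
  obtain ⟨m, hm, x, hxP, hx⟩ :=
    FrankWolfe.exists_minimizing_seq hPne ⟨L, Set.forall_mem_image.2 hL⟩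
  subst hPdef
  obtain ⟨y, hyP, rfl⟩ := FrankWolfe.attainsQuadraticInf (Fin k) _ Q hQ c a b m x hxP hm hx
  exact ⟨y, hyP, hm⟩
end

section
/- Frank–Wolfe theorem on finite unions of polyhedra: Let Q : ℝ^d → ℝ^d be a symmetric linear map, c ∈ ℝ^d, and define the quadratic function f(x) = ½⟨x, Q x⟩ + ⟨c, x⟩. Let W = P_1 ∪ … ∪ P_N be a nonempty finite union of polyhedra in ℝ^d. If f is bounded below on W, then f attains its minimum over W. In particular, a convex quadratic function bounded below (e.g. nonnegative) on the feasible set of a mathematical program with affine equilibrium constraints, whose feasible region is a finite union of polyhedra, attains its global minimum. -/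
/-!
Induct on `dim U + #Sᶜ` for the slices `{x ∈ U | ⟪a i, x⟫ ≤ b i, with equality for i ∈ S}` of a
polyhedron. If `f` has no minimiser on a slice, a minimising sequence escapes to infinity, and a
limit `d` of its normalised terms is a recession direction of the slice on which the quadratic
part of `f` vanishes, so `f` is affine along `d`, and nondecreasing because it is bounded below.
If some constraint strictly decreases along `d`, pushing each point back along `-d` until a new
constraint becomes tight does not increase `f` and lands in a slice with one more equality.
Otherwise `f` is constant along the whole line through `d`, and projecting onto `d^⊥` lands in a
slice of smaller dimension. Either way the minimum is attained on finitely many smaller slices,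
hence on the slice itself, and a finite union of polyhedra inherits it from its pieces.
-/

open Filter Topology Finset
open scoped RealInnerProductSpace

theorem exists_isMinOn_of_forall_exists_le {α β : Type*} [Preorder β] {f : α → β}
    {s t : Set α} (hts : t ⊆ s) (hdom : ∀ x ∈ s, ∃ y ∈ t, f y ≤ f x)
    (ht : ∃ y ∈ t, IsMinOn f t y) : ∃ x ∈ s, IsMinOn f s x :=
  let ⟨y, hy, hymin⟩ := ht
  ⟨y, hts hy, isMinOn_iff.mpr fun x hx =>
    let ⟨_, hz, hzx⟩ := hdom x hx
    (isMinOn_iff.mp hymin _ hz).trans hzx⟩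

theorem exists_isMinOn_iUnion {α β ι : Type*} [LinearOrder β] [Finite ι] {f : α → β}
    {s : ι → Set α} (h : ∀ i, (s i).Nonempty → ∃ x ∈ s i, IsMinOn f (s i) x)
    (hne : (⋃ i, s i).Nonempty) : ∃ x ∈ ⋃ i, s i, IsMinOn f (⋃ i, s i) x := by
  classical
  have := Fintype.ofFinite ι
  obtain ⟨y₀, hy₀⟩ := hne
  have : Nonempty α := ⟨y₀⟩
  choose! x hxs hxmin using h
  obtain ⟨j₀, hj₀⟩ := Set.mem_iUnion.mp hy₀
  obtain ⟨i, hi, himin⟩ := ({j | (s j).Nonempty} : Finset ι).exists_min_image (f ∘ x)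
    ⟨j₀, by simpa using ⟨y₀, hj₀⟩⟩
  have hi : (s i).Nonempty := by simpa using hi
  refine ⟨x i, Set.mem_iUnion.mpr ⟨i, hxs i hi⟩, isMinOn_iff.mpr fun y hy => ?_⟩
  obtain ⟨j, hj⟩ := Set.mem_iUnion.mp hy
  exact (himin j (by simpa using ⟨y, hj⟩)).trans (isMinOn_iff.mp (hxmin j ⟨y, hj⟩) y hj)

theorem nonneg_of_forall_le_add_mul {L a b : ℝ} (h : ∀ t : ℝ, 0 ≤ t → L ≤ a + t * b) :
    0 ≤ b := by
  by_contra! hb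
  have hmul : (|L - a| + 1) / -b * -b = |L - a| + 1 := div_mul_cancel₀ _ (by linarith)
  have := h ((|L - a| + 1) / -b) (div_nonneg (by positivity) (by linarith))
  linarith [neg_le_abs (L - a)]

theorem eq_zero_of_forall_le_add_mul {L a b : ℝ} (h : ∀ t : ℝ, L ≤ a + t * b) : b = 0 := by
  have hneg : 0 ≤ -b := nonneg_of_forall_le_add_mul fun t _ => by simpa using h (-t)
  linarith [nonneg_of_forall_le_add_mul fun t _ => h t]

theorem exists_seq_tendsto_norm_atTop_of_not_exists_isMinOn {F : Type*} [NormedAddCommGroup F]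
    [ProperSpace F] {s : Set F} {f : F → ℝ} (hs : IsClosed s) (hf : Continuous f)
    (hne : s.Nonempty) (hbdd : BddBelow (f '' s)) (hmin : ¬∃ x ∈ s, IsMinOn f s x) :
    ∃ x : ℕ → F, (∀ m, x m ∈ s) ∧ (∃ μ, Tendsto (f ∘ x) atTop (𝓝 μ)) ∧
      Tendsto (‖x ·‖) atTop atTop := by
  obtain ⟨u, -, hu, hus⟩ := exists_seq_tendsto_sInf (hne.image f) hbdd
  choose x hxs hxu using hus
  have hfx : Tendsto (f ∘ x) atTop (𝓝 (sInf (f '' s))) := by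
    simpa [Function.comp_def, hxu] using hu
  refine ⟨x, hxs, ⟨_, hfx⟩, tendsto_atTop.mpr ?_⟩
  by_contra! hbounded
  obtain ⟨R, hR⟩ := hbounded
  have hfreq : ∃ᶠ m in atTop, x m ∈ s ∩ Metric.closedBall 0 R :=
    hR.mono fun m hm => ⟨hxs m, by simpa using hm.le⟩
  obtain ⟨z, hz, φ, hφ, hlim⟩ :=
    ((isCompact_closedBall 0 R).inter_left hs).tendsto_subseq' hfreq
  have hfz : f z = sInf (f '' s) :=
    tendsto_nhds_unique ((hf.tendsto z).comp hlim) (hfx.comp hφ.tendsto_atTop)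
  exact hmin ⟨z, hz.1, isMinOn_iff.mpr fun y hy => hfz ▸ csInf_le hbdd ⟨y, hy, rfl⟩⟩

theorem exists_subseq_tendsto_normalize {F : Type*} [NormedAddCommGroup F] [NormedSpace ℝ F]
    [ProperSpace F] {x : ℕ → F} (hx : Tendsto (‖x ·‖) atTop atTop) :
    ∃ d, ‖d‖ = 1 ∧ ∃ φ : ℕ → ℕ, StrictMono φ ∧
      Tendsto (fun m => ‖x (φ m)‖⁻¹ • x (φ m)) atTop (𝓝 d) := by
  have hsphere : ∀ᶠ m in atTop, ‖x m‖⁻¹ • x m ∈ Metric.sphere (0 : F) 1 := by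
    filter_upwards [hx.eventually_gt_atTop 0] with m hm
    simp [norm_smul, hm.ne']
  obtain ⟨d, hd, φ, hφ, hlim⟩ := (isCompact_sphere (0 : F) 1).tendsto_subseq' hsphere.frequently
  exact ⟨d, by simpa using hd, φ, hφ, hlim⟩

section InnerProductSpace

variable {E : Type*} [NormedAddCommGroup E] [InnerProductSpace ℝ E]

theorem inner_le_zero_of_tendsto_normalize {x : ℕ → E} {a d : E} {b : ℝ}
    (hx : Tendsto (‖x ·‖) atTop atTop) (hd : Tendsto (fun m => ‖x m‖⁻¹ • x m) atTop (𝓝 d))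
    (hab : ∀ m, ⟪a, x m⟫ ≤ b) : ⟪a, d⟫ ≤ 0 := by
  have hlim : Tendsto (fun m => ‖x m‖⁻¹ * b) atTop (𝓝 0) := by
    simpa using (tendsto_inv_atTop_zero.comp hx).mul_const b
  refine le_of_tendsto_of_tendsto' (tendsto_const_nhds.inner hd) hlim fun m => ?_
  rw [real_inner_smul_right]
  exact mul_le_mul_of_nonneg_left (hab m) (by positivity)

theorem inner_eq_zero_of_tendsto_normalize {x : ℕ → E} {a d : E} {b : ℝ}
    (hx : Tendsto (‖x ·‖) atTop atTop) (hd : Tendsto (fun m => ‖x m‖⁻¹ • x m) atTop (𝓝 d))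
    (hab : ∀ m, ⟪a, x m⟫ = b) : ⟪a, d⟫ = 0 := by
  have hneg : ⟪-a, d⟫ ≤ 0 :=
    inner_le_zero_of_tendsto_normalize hx hd (b := -b) fun m => by simp [hab m]
  rw [inner_neg_left] at hneg
  exact le_antisymm (inner_le_zero_of_tendsto_normalize hx hd (hab · |>.le)) (by linarith)

noncomputable def quadraticFn (Q : E →ₗ[ℝ] E) (c x : E) : ℝ := 1 / 2 * ⟪x, Q x⟫ + ⟪c, x⟫

variable {Q : E →ₗ[ℝ] E} {c : E}

theorem continuous_quadraticFn [FiniteDimensional ℝ E] : Continuous (quadraticFn Q c) := by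
  have := Q.continuous_of_finiteDimensional
  unfold quadraticFn
  fun_prop

theorem quadraticFn_add_smul (hQ : Q.IsSymmetric) (x v : E) (t : ℝ) :
    quadraticFn Q c (x + t • v) =
      quadraticFn Q c x + t * ⟪Q x + c, v⟫ + t ^ 2 * (1 / 2 * ⟪v, Q v⟫) := by
  have hsymm : ⟪v, Q x⟫ = ⟪x, Q v⟫ := by rw [real_inner_comm, hQ]
  simp only [quadraticFn, map_add, map_smul, inner_add_left, inner_add_right,
    real_inner_smul_left, real_inner_smul_right, hsymm, hQ x v]
  ring

theorem quadraticFn_add_smul_of_inner_map_self_eq_zero (hQ : Q.IsSymmetric) {v : E}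
    (hv : ⟪v, Q v⟫ = 0) (x : E) (t : ℝ) :
    quadraticFn Q c (x + t • v) = quadraticFn Q c x + t * ⟪Q x + c, v⟫ := by
  rw [quadraticFn_add_smul hQ, hv, mul_zero, mul_zero, add_zero]

theorem inner_add_nonneg_of_bddBelow_ray (hQ : Q.IsSymmetric) {s : Set E} {x v : E}
    (hbdd : BddBelow (quadraticFn Q c '' s)) (hv : ⟪v, Q v⟫ = 0)
    (hray : ∀ t : ℝ, 0 ≤ t → x + t • v ∈ s) : 0 ≤ ⟪Q x + c, v⟫ := by
  obtain ⟨L, hL⟩ := hbdd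
  refine nonneg_of_forall_le_add_mul (L := L) (a := quadraticFn Q c x) fun t ht => ?_
  rw [← quadraticFn_add_smul_of_inner_map_self_eq_zero hQ hv]
  exact hL ⟨_, hray t ht, rfl⟩

theorem inner_add_eq_zero_of_bddBelow_line (hQ : Q.IsSymmetric) {s : Set E} {x v : E}
    (hbdd : BddBelow (quadraticFn Q c '' s)) (hv : ⟪v, Q v⟫ = 0)
    (hline : ∀ t : ℝ, x + t • v ∈ s) : ⟪Q x + c, v⟫ = 0 := by
  obtain ⟨L, hL⟩ := hbdd
  refine eq_zero_of_forall_le_add_mul (L := L) (a := quadraticFn Q c x) fun t => ?_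
  rw [← quadraticFn_add_smul_of_inner_map_self_eq_zero hQ hv]
  exact hL ⟨_, hline t, rfl⟩

theorem inner_map_self_eq_zero_of_tendsto_normalize [FiniteDimensional ℝ E] {x : ℕ → E}
    {d : E} {μ : ℝ} (hx : Tendsto (‖x ·‖) atTop atTop)
    (hd : Tendsto (fun m => ‖x m‖⁻¹ • x m) atTop (𝓝 d))
    (hf : Tendsto (fun m => quadraticFn Q c (x m)) atTop (𝓝 μ)) : ⟪d, Q d⟫ = 0 := by
  set r := fun m => ‖x m‖⁻¹
  have hr : Tendsto r atTop (𝓝 0) := tendsto_inv_atTop_zero.comp hx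
  have hscale (m : ℕ) : ⟪r m • x m, Q (r m • x m)⟫ =
      2 * r m ^ 2 * quadraticFn Q c (x m) - 2 * r m * ⟪c, r m • x m⟫ := by
    simp only [quadraticFn, map_smul, real_inner_smul_left, real_inner_smul_right]
    ring
  have hlhs : Tendsto (fun m => ⟪r m • x m, Q (r m • x m)⟫) atTop (𝓝 ⟪d, Q d⟫) :=
    hd.inner ((Q.continuous_of_finiteDimensional.tendsto d).comp hd)
  have hrhs : Tendsto (fun m => 2 * r m ^ 2 * quadraticFn Q c (x m) - 2 * r m * ⟪c, r m • x m⟫)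
      atTop (𝓝 0) := by
    simpa using (((hr.pow 2).const_mul 2).mul hf).sub
      ((hr.const_mul 2).mul (tendsto_const_nhds.inner hd))
  exact tendsto_nhds_unique (hlhs.congr hscale) hrhs

variable {ι : Type*}

def polyhedralSlice (U : Submodule ℝ E) (a : ι → E) (b : ι → ℝ) (S : Finset ι) : Set E :=
  {x | x ∈ U ∧ (∀ i, ⟪a i, x⟫ ≤ b i) ∧ ∀ i ∈ S, ⟪a i, x⟫ = b i}

variable {U : Submodule ℝ E} {a : ι → E} {b : ι → ℝ} {S : Finset ι}

theorem isClosed_polyhedralSlice [FiniteDimensional ℝ E] :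
    IsClosed (polyhedralSlice U a b S) := by
  have hcont (i : ι) : Continuous fun x : E => ⟪a i, x⟫ := continuous_const.inner continuous_id
  refine U.closed_of_finiteDimensional.inter (IsClosed.inter ?_ ?_)
  · show IsClosed {x | ∀ i, ⟪a i, x⟫ ≤ b i}
    rw [Set.ofPred_forall]
    exact isClosed_iInter fun i => isClosed_le (hcont i) continuous_const
  · show IsClosed {x | ∀ i ∈ S, ⟪a i, x⟫ = b i}
    simp only [Set.ofPred_forall]
    exact isClosed_iInter fun i => isClosed_iInter fun _ => isClosed_eq (hcont i) continuous_const

theorem polyhedralSlice_anti {U' : Submodule ℝ E} {S' : Finset ι} (hU : U' ≤ U) (hS : S ⊆ S') :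
    polyhedralSlice U' a b S' ⊆ polyhedralSlice U a b S :=
  fun _ ⟨hxU, hle, heq⟩ => ⟨hU hxU, hle, fun i hi => heq i (hS hi)⟩

theorem add_smul_mem_polyhedralSlice {x v : E} {t : ℝ} (hx : x ∈ polyhedralSlice U a b S)
    (hv : v ∈ U) (hle : ∀ i, ⟪a i, x⟫ + t * ⟪a i, v⟫ ≤ b i) (heq : ∀ i ∈ S, ⟪a i, v⟫ = 0) :
    x + t • v ∈ polyhedralSlice U a b S := by
  refine ⟨U.add_mem hx.1 (U.smul_mem t hv), fun i => ?_, fun i hi => ?_⟩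
  · simpa only [inner_add_right, real_inner_smul_right] using hle i
  · rw [inner_add_right, real_inner_smul_right, heq i hi, mul_zero, add_zero, hx.2.2 i hi]

theorem add_smul_mem_polyhedralSlice_of_nonneg {x v : E} {t : ℝ}
    (hx : x ∈ polyhedralSlice U a b S) (hv : v ∈ U) (hle : ∀ i, ⟪a i, v⟫ ≤ 0)
    (heq : ∀ i ∈ S, ⟪a i, v⟫ = 0) (ht : 0 ≤ t) : x + t • v ∈ polyhedralSlice U a b S :=
  add_smul_mem_polyhedralSlice hx hv
    (fun i => add_le_of_le_of_nonpos (hx.2.1 i) (mul_nonpos_of_nonneg_of_nonpos ht (hle i))) heq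

theorem exists_add_smul_mem_polyhedralSlice_insert [Fintype ι] [DecidableEq ι] {x v : E}
    (hx : x ∈ polyhedralSlice U a b S) (hv : v ∈ U) (hle : ∀ i, ⟪a i, v⟫ ≤ 0)
    (heq : ∀ i ∈ S, ⟪a i, v⟫ = 0) (hneg : ∃ i, ⟪a i, v⟫ < 0) :
    ∃ t ≤ (0 : ℝ), ∃ j, ⟪a j, v⟫ < 0 ∧ x + t • v ∈ polyhedralSlice U a b (insert j S) := by
  -- `j` is the first constraint that becomes tight when moving from `x` along `-v`
  set slack : ι → ℝ := fun i => (b i - ⟪a i, x⟫) / -⟪a i, v⟫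
  obtain ⟨j, hj, hjmin⟩ := ({i | ⟪a i, v⟫ < 0} : Finset ι).exists_min_image slack
    (hneg.imp fun i hi => by simpa using hi)
  simp only [Finset.mem_filter, Finset.mem_univ, true_and] at hj hjmin
  have hslack : slack j * -⟪a j, v⟫ = b j - ⟪a j, x⟫ := div_mul_cancel₀ _ (by linarith)
  have hmem : x + (-slack j) • v ∈ polyhedralSlice U a b S := by
    refine add_smul_mem_polyhedralSlice hx hv (fun i => ?_) heq
    rcases (hle i).lt_or_eq with hi | hi
    · have := (le_div_iff₀ (by linarith)).mp (hjmin i hi)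
      linarith
    · rw [hi, mul_zero, add_zero]
      exact hx.2.1 i
  refine ⟨-slack j, neg_nonpos.mpr (div_nonneg ?_ (by linarith)), j, hj, hmem.1, hmem.2.1, ?_⟩
  · linarith [hx.2.1 j]
  intro i hi
  rcases Finset.mem_insert.mp hi with rfl | hi
  · rw [inner_add_right, real_inner_smul_right]
    linarith
  · exact hmem.2.2 i hi

theorem add_smul_mem_polyhedralSlice_inf_orthogonal {x v : E}
    (hx : x ∈ polyhedralSlice U a b S) (hv : v ∈ U) (hv1 : ‖v‖ = 1) (h0 : ∀ i, ⟪a i, v⟫ = 0) :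
    x + (-⟪v, x⟫) • v ∈ polyhedralSlice (U ⊓ (ℝ ∙ v)ᗮ) a b S := by
  have hmem := add_smul_mem_polyhedralSlice (t := -⟪v, x⟫) hx hv
    (fun i => by simpa [h0 i] using hx.2.1 i) (fun i _ => h0 i)
  refine ⟨⟨hmem.1, Submodule.mem_orthogonal_singleton_iff_inner_right.mpr ?_⟩, hmem.2⟩
  rw [inner_add_right, real_inner_smul_right, real_inner_self_eq_norm_sq, hv1]
  ring

theorem finrank_inf_orthogonal_lt [FiniteDimensional ℝ E] {v : E} (hv : v ∈ U) (hv0 : v ≠ 0) :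
    Module.finrank ℝ ↥(U ⊓ (ℝ ∙ v)ᗮ) < Module.finrank ℝ U := by
  refine Submodule.finrank_lt_finrank_of_lt (inf_le_left.lt_of_ne fun h => hv0 ?_)
  have hvperp : v ∈ (ℝ ∙ v)ᗮ := (show v ∈ U ⊓ (ℝ ∙ v)ᗮ by rwa [h]).2
  exact inner_self_eq_zero.mp (Submodule.mem_orthogonal_singleton_iff_inner_right.mp hvperp)

theorem exists_le_mem_polyhedralSlice_insert [Fintype ι] [DecidableEq ι] (hQ : Q.IsSymmetric)
    {x d : E} (hbdd : BddBelow (quadraticFn Q c '' polyhedralSlice U a b S))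
    (hx : x ∈ polyhedralSlice U a b S) (hdU : d ∈ U) (hle : ∀ i, ⟪a i, d⟫ ≤ 0)
    (heq : ∀ i ∈ S, ⟪a i, d⟫ = 0) (hdQd : ⟪d, Q d⟫ = 0) (hneg : ∃ i, ⟪a i, d⟫ < 0) :
    ∃ j, ⟪a j, d⟫ < 0 ∧
      ∃ y ∈ polyhedralSlice U a b (insert j S), quadraticFn Q c y ≤ quadraticFn Q c x := by
  have hgrad : 0 ≤ ⟪Q x + c, d⟫ := inner_add_nonneg_of_bddBelow_ray hQ hbdd hdQd fun _ ht =>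
    add_smul_mem_polyhedralSlice_of_nonneg hx hdU hle heq ht
  obtain ⟨t, ht, j, hj, hmem⟩ := exists_add_smul_mem_polyhedralSlice_insert hx hdU hle heq hneg
  refine ⟨j, hj, _, hmem, ?_⟩
  rw [quadraticFn_add_smul_of_inner_map_self_eq_zero hQ hdQd]
  linarith [mul_nonpos_of_nonpos_of_nonneg ht hgrad]

theorem exists_le_mem_polyhedralSlice_inf_orthogonal (hQ : Q.IsSymmetric) {x d : E}
    (hbdd : BddBelow (quadraticFn Q c '' polyhedralSlice U a b S))
    (hx : x ∈ polyhedralSlice U a b S) (hdU : d ∈ U) (hd1 : ‖d‖ = 1)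
    (h0 : ∀ i, ⟪a i, d⟫ = 0) (hdQd : ⟪d, Q d⟫ = 0) :
    ∃ y ∈ polyhedralSlice (U ⊓ (ℝ ∙ d)ᗮ) a b S, quadraticFn Q c y ≤ quadraticFn Q c x := by
  have hgrad : ⟪Q x + c, d⟫ = 0 := inner_add_eq_zero_of_bddBelow_line hQ hbdd hdQd fun _ =>
    add_smul_mem_polyhedralSlice hx hdU (fun i => by simpa [h0 i] using hx.2.1 i)
      (fun i _ => h0 i)
  refine ⟨_, add_smul_mem_polyhedralSlice_inf_orthogonal hx hdU hd1 h0, le_of_eq ?_⟩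
  rw [quadraticFn_add_smul_of_inner_map_self_eq_zero hQ hdQd, hgrad, mul_zero, add_zero]

variable [FiniteDimensional ℝ E]

theorem exists_recession_direction_of_not_exists_isMinOn
    (hne : (polyhedralSlice U a b S).Nonempty)
    (hbdd : BddBelow (quadraticFn Q c '' polyhedralSlice U a b S))
    (hmin : ¬∃ x ∈ polyhedralSlice U a b S,
      IsMinOn (quadraticFn Q c) (polyhedralSlice U a b S) x) :
    ∃ d : E, ‖d‖ = 1 ∧ d ∈ U ∧ (∀ i, ⟪a i, d⟫ ≤ 0) ∧ (∀ i ∈ S, ⟪a i, d⟫ = 0) ∧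
      ⟪d, Q d⟫ = 0 := by
  obtain ⟨x, hxP, ⟨μ, hμ⟩, hx⟩ := exists_seq_tendsto_norm_atTop_of_not_exists_isMinOn
    isClosed_polyhedralSlice continuous_quadraticFn hne hbdd hmin
  obtain ⟨d, hd1, φ, hφ, hd⟩ := exists_subseq_tendsto_normalize hx
  have hxφ : Tendsto (fun m => ‖x (φ m)‖) atTop atTop := hx.comp hφ.tendsto_atTop
  refine ⟨d, hd1, ?_, fun i => ?_, fun i hi => ?_, ?_⟩
  · exact U.closed_of_finiteDimensional.mem_of_tendsto hd
      (.of_forall fun m => U.smul_mem _ (hxP (φ m)).1)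
  · exact inner_le_zero_of_tendsto_normalize hxφ hd fun m => (hxP (φ m)).2.1 i
  · exact inner_eq_zero_of_tendsto_normalize hxφ hd fun m => (hxP (φ m)).2.2 i hi
  · exact inner_map_self_eq_zero_of_tendsto_normalize hxφ hd (hμ.comp hφ.tendsto_atTop)

theorem exists_isMinOn_polyhedralSlice [Fintype ι] [DecidableEq ι] (hQ : Q.IsSymmetric)
    (hne : (polyhedralSlice U a b S).Nonempty)
    (hbdd : BddBelow (quadraticFn Q c '' polyhedralSlice U a b S)) :
    ∃ x ∈ polyhedralSlice U a b S, IsMinOn (quadraticFn Q c) (polyhedralSlice U a b S) x := by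
  induction hn : Module.finrank ℝ U + #Sᶜ using Nat.strong_induction_on generalizing U S with
  | _ n ih =>
  by_contra hmin
  obtain ⟨d, hd1, hdU, hle, heq, hdQd⟩ :=
    exists_recession_direction_of_not_exists_isMinOn hne hbdd hmin
  apply hmin
  obtain ⟨x₀, hx₀⟩ := hne
  by_cases hneg : ∃ i, ⟪a i, d⟫ < 0
  · set T := ⋃ j : {j // ⟪a j, d⟫ < 0}, polyhedralSlice U a b (insert j.1 S)
    have hdom (x : E) (hx : x ∈ polyhedralSlice U a b S) :
        ∃ y ∈ T, quadraticFn Q c y ≤ quadraticFn Q c x :=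
      let ⟨j, hj, y, hy, hyx⟩ :=
        exists_le_mem_polyhedralSlice_insert hQ hbdd hx hdU hle heq hdQd hneg
      ⟨y, Set.mem_iUnion.mpr ⟨⟨j, hj⟩, hy⟩, hyx⟩
    obtain ⟨y₀, hy₀, -⟩ := hdom x₀ hx₀
    refine exists_isMinOn_of_forall_exists_le
      (Set.iUnion_subset fun j => polyhedralSlice_anti le_rfl (subset_insert _ _)) hdom
      (exists_isMinOn_iUnion (fun j hj => ?_) ⟨y₀, hy₀⟩)
    have hjS : j.1 ∉ S := fun hjS => j.2.ne (heq j hjS)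
    refine ih _ ?_ hj (hbdd.mono (Set.image_mono (polyhedralSlice_anti le_rfl (subset_insert _ _))))
      rfl
    rw [← hn]
    exact Nat.add_lt_add_left (card_lt_card (compl_lt_compl_iff_lt.mpr (ssubset_insert hjS))) _
  · simp only [not_exists, not_lt] at hneg
    have h0 (i : ι) : ⟪a i, d⟫ = 0 := (hle i).antisymm (hneg i)
    have hdom (x : E) (hx : x ∈ polyhedralSlice U a b S) :
        ∃ y ∈ polyhedralSlice (U ⊓ (ℝ ∙ d)ᗮ) a b S, quadraticFn Q c y ≤ quadraticFn Q c x :=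
      exists_le_mem_polyhedralSlice_inf_orthogonal hQ hbdd hx hdU hd1 h0 hdQd
    obtain ⟨y₀, hy₀, -⟩ := hdom x₀ hx₀
    have hlt : Module.finrank ℝ ↥(U ⊓ (ℝ ∙ d)ᗮ) + #Sᶜ < n := hn ▸
      Nat.add_lt_add_right (finrank_inf_orthogonal_lt hdU (norm_ne_zero_iff.mp (by simp [hd1]))) _
    exact exists_isMinOn_of_forall_exists_le (polyhedralSlice_anti inf_le_left subset_rfl) hdom
      (ih _ hlt ⟨y₀, hy₀⟩ (hbdd.mono (Set.image_mono (polyhedralSlice_anti inf_le_left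
        subset_rfl))) rfl)

end InnerProductSpace

/-- Frank–Wolfe theorem on finite unions of polyhedra: a quadratic function
bounded below on a nonempty finite union of polyhedra attains its minimum
there (as in MPECs with affine equilibrium constraints). -/
theorem frank_wolfe_union_polyhedra {d N : ℕ}
    (Q : EuclideanSpace ℝ (Fin d) →ₗ[ℝ] EuclideanSpace ℝ (Fin d))
    (hQ : ∀ x y : EuclideanSpace ℝ (Fin d), (inner ℝ (Q x) y : ℝ) = inner ℝ x (Q y))
    (c : EuclideanSpace ℝ (Fin d))
    (f : EuclideanSpace ℝ (Fin d) → ℝ)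
    (hfdef : ∀ x, f x = (1 / 2) * inner ℝ x (Q x) + (inner ℝ c x : ℝ))
    (P : Fin N → Set (EuclideanSpace ℝ (Fin d)))
    (hPpoly : ∀ j, ∃ (k : ℕ) (a : Fin k → EuclideanSpace ℝ (Fin d)) (b : Fin k → ℝ),
      P j = {x | ∀ i, (inner ℝ (a i) x : ℝ) ≤ b i})
    (W : Set (EuclideanSpace ℝ (Fin d)))
    (hWdef : W = ⋃ j, P j)
    (hWne : W.Nonempty)
    (hbdd : ∃ L : ℝ, ∀ x ∈ W, L ≤ f x) :
    ∃ x ∈ W, ∀ y ∈ W, f x ≤ f y := by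
  obtain rfl : f = quadraticFn Q c := funext hfdef
  subst hWdef
  have hbddW : BddBelow (quadraticFn Q c '' ⋃ j, P j) :=
    let ⟨L, hL⟩ := hbdd
    ⟨L, Set.forall_mem_image.mpr hL⟩
  refine exists_isMinOn_iUnion (f := quadraticFn Q c) (fun j hne => ?_) hWne
  obtain ⟨k, a, b, hPj⟩ := hPpoly j
  have hslice : P j = polyhedralSlice ⊤ a b ∅ := by
    ext x
    simp [hPj, polyhedralSlice]
  have hbddj := hbddW.mono (Set.image_mono (Set.subset_iUnion P j))
  rw [hslice] at hne hbddj ⊢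
  exact exists_isMinOn_polyhedralSlice hQ hne hbddj
end

section
/- The set 𝓕 = {(x, −1) : x ∈ [0, 1]} ∪ {(x, 0) : x ∈ [−1, 0)} ⊆ ℝ² is neither closed nor convex: the sequence (−1/k, 0) lies in 𝓕 and converges to (0, 0) ∉ 𝓕, and 𝓕 fails convexity. -/
open scoped Topology

open Filter Set

/-! The points `(-1/k, 0)` of the lower-left branch accumulate at the origin, which belongs to
neither branch since the left branch `[-1, 0)` is open at `0`; and the midpoint `(-1/2, -1/2)`
of `(0, -1)` and `(-1, 0)` lies at a height attained by neither branch. -/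

theorem neg_one_div_natCast_mem_Ico {k : ℕ} (hk : 1 ≤ k) : -(1 / (k : ℝ)) ∈ Ico (-1) 0 := by
  have hk' : (1 : ℝ) ≤ k := by exact_mod_cast hk
  have hkpos : (0 : ℝ) < k := one_pos.trans_le hk'
  constructor
  · have : 1 / (k : ℝ) ≤ 1 := (div_le_one hkpos).2 hk'
    linarith
  · simpa using hkpos

theorem tendsto_neg_one_div_natCast_atTop_nhds_zero :
    Tendsto (fun k : ℕ => -(1 / (k : ℝ))) atTop (𝓝 0) := by
  simpa using (tendsto_one_div_atTop_nhds_zero_nat (𝕜 := ℝ)).neg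

theorem midpoint_zero_neg_one_neg_one_zero :
    midpoint ℝ ((0 : ℝ), (-1 : ℝ)) (-1, 0) = (-(1 / 2), -(1 / 2)) := by
  ext <;> norm_num [midpoint_eq_smul_add]

/-- The MPEC feasible region `𝓕 = {(x,−1) : x ∈ [0,1]} ∪ {(x,0) : x ∈ [−1,0)}`
is neither closed nor convex: the sequence `(−1/k, 0)` lies in `𝓕` and converges
to `(0,0) ∉ 𝓕`, and `𝓕` fails convexity. -/
theorem mpec_feasible_region_not_closed_not_convex
    (F : Set (ℝ × ℝ))
    (hF : F = (fun x => (x, (-1 : ℝ))) '' Set.Icc (0 : ℝ) 1 ∪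
      (fun x => (x, (0 : ℝ))) '' Set.Ico (-1 : ℝ) 0) :
    (∀ k : ℕ, 1 ≤ k → (-(1 / (k : ℝ)), (0 : ℝ)) ∈ F) ∧
    Filter.Tendsto (fun k : ℕ => ((-(1 / (k : ℝ)), (0 : ℝ)) : ℝ × ℝ))
      Filter.atTop (𝓝 ((0 : ℝ), (0 : ℝ))) ∧
    ((0 : ℝ), (0 : ℝ)) ∉ F ∧
    ¬ IsClosed F ∧
    ¬ Convex ℝ F := by
  rw [← prod_singleton, ← prod_singleton] at hF
  subst hF
  have hmem : ∀ k : ℕ, 1 ≤ k → (-(1 / (k : ℝ)), (0 : ℝ)) ∈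
      Icc 0 1 ×ˢ {-1} ∪ Ico (-1) 0 ×ˢ {0} :=
    fun k hk => Or.inr ⟨neg_one_div_natCast_mem_Ico hk, rfl⟩
  have htend := tendsto_neg_one_div_natCast_atTop_nhds_zero.prodMk_nhds
    (tendsto_const_nhds (x := (0 : ℝ)))
  have horigin : ((0 : ℝ), (0 : ℝ)) ∉ Icc 0 1 ×ˢ {-1} ∪ Ico (-1) 0 ×ˢ {0} := by simp
  refine ⟨hmem, htend, horigin, fun hclosed => ?_, fun hconv => ?_⟩
  · exact horigin (hclosed.mem_of_tendsto htend (eventually_atTop.2 ⟨1, hmem⟩))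
  · have hmid := hconv.midpoint_mem (x := (0, -1)) (y := (-1, 0)) (by simp) (by simp)
    rw [midpoint_zero_neg_one_neg_one_zero] at hmid
    norm_num at hmid
end
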